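/- Let f:[0,1]→ℝ be piecewise bounded Lipschitz such that v(x) ≠ 0 at every discontinuity point of f, v ∈ BL([0,1]), T ≥ 0, and let μ:[0,T]→M([0,1]) be the unique mild solution of ∂_t μ_t + ∂_x(v μ_t) = f·μ_t with initial value ν₀, i.e. the unique continuous, TV-bounded map satisfying μ_t = P_t ν₀ + ∫_0^t P_{t−s}(f·μ_s) ds. Then μ is a weak solution: for every ψ ∈ C¹([0,1]×[0,T]) with ∂_x ψ(0,t) = ∂_x ψ(1,t) = 0 for all t, ⟨μ_T, ψ(·,T)⟩ − ⟨ν₀, ψ(·,0)⟩ = ∫_0^T ⟨μ_t, ∂_t ψ(·,t) + ∂_x ψ(·,t)·v⟩ dt + ∫_0^T ⟨f·μ_t, ψ(·,t)⟩ dt. -/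

import Mathlib

open MeasureTheory Set Filter
open scoped ENNReal NNReal Topology

noncomputable section

abbrev I01 : Type := Set.Icc (0:ℝ) 1

noncomputable def tvNorm (μ : SignedMeasure I01) : ℝ :=
  (μ.totalVariation Set.univ).toReal

noncomputable def supNorm (φ : I01 → ℝ) : ℝ := ⨆ x : I01, |φ x|

noncomputable def lipConst (φ : I01 → ℝ) : ℝ :=
  sInf {K : ℝ | 0 ≤ K ∧ ∀ x y : I01, |φ x - φ y| ≤ K * dist x y}

noncomputable def blNorm (φ : I01 → ℝ) : ℝ := supNorm φ + lipConst φ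

noncomputable def pairSM (μ : SignedMeasure I01) (φ : I01 → ℝ) : ℝ :=
  ∫ x, φ x ∂μ.toJordanDecomposition.posPart - ∫ x, φ x ∂μ.toJordanDecomposition.negPart

noncomputable def dualBLNorm (μ : SignedMeasure I01) : ℝ :=
  sSup {r : ℝ | ∃ φ : I01 → ℝ, Continuous φ ∧ blNorm φ ≤ 1 ∧ r = |pairSM μ φ|}

noncomputable def Ff (f : I01 → ℝ) (μ : SignedMeasure I01) : SignedMeasure I01 :=
  μ.toJordanDecomposition.posPart.withDensityᵥ f -
    μ.toJordanDecomposition.negPart.withDensityᵥ f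

/-- The stopped flow on `[0,1]` generated by a velocity field `v`: trajectories solve
`ẋ = v(x)` up to the boundary-hitting time `τ` and are frozen afterwards at the boundary
point reached; `τ` is maximal (the trajectory is stopped only where `v` pushes it
strictly out of `[0,1]`). -/
structure StoppedFlow where
  v : I01 → ℝ
  Φ : ℝ → I01 → I01
  τ : I01 → ℝ≥0∞
  init : ∀ y, Φ 0 y = y
  ode : ∀ y, ∀ t : ℝ, 0 ≤ t → ENNReal.ofReal t < τ y →
      HasDerivAt (fun s => (Φ s y : ℝ)) (v (Φ t y)) t
  stopped : ∀ y, ∀ t : ℝ, τ y ≤ ENNReal.ofReal t →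
      (Φ t y : ℝ) = 0 ∨ (Φ t y : ℝ) = 1
  frozen : ∀ y, ∀ s t : ℝ, τ y ≤ ENNReal.ofReal s → s ≤ t → Φ t y = Φ s y
  maximal : ∀ y, τ y ≠ ⊤ →
      (((Φ (τ y).toReal y : ℝ) = 0 ∧ v (Φ (τ y).toReal y) < 0) ∨
       ((Φ (τ y).toReal y : ℝ) = 1 ∧ 0 < v (Φ (τ y).toReal y)))
  cont_t : ∀ y, Continuous fun t => Φ t y
  cont_y : ∀ t : ℝ, 0 ≤ t → Continuous fun y => Φ t y

/-!
Pair the variation-of-constants formula with test functions and integrate along the stopped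
characteristics: for every finite signed measure `σ` and `0 ≤ a ≤ T`,
`⟨P_{T-a} σ, ψ_T⟩ - ⟨σ, ψ_a⟩ = ∫_a^T ⟨P_{t-a} σ, ∂ₜψ_t + v ∂ₓψ_t⟩ dt`,
the no-flux condition taking care of trajectories frozen at the boundary. Applied to `ν₀` and
to every `f·μ_s` in the mild formula at time `T`, and compared with the mild formula at time
`t` tested against `∂ₜψ_t + v ∂ₓψ_t`, this leaves two iterated integrals over the triangle
`0 ≤ s ≤ t ≤ T`, which agree by Fubini. The measurability behind Fubini comes from the
`‖·‖_BL*`-continuity of `t ↦ μ_t`, extended from Lipschitz to bounded measurable test functions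
by a monotone class argument, and integrability from the bound on the total variation.
-/

def BddMeasurable (φ : I01 → ℝ) : Prop := Measurable φ ∧ ∃ M, ∀ x, |φ x| ≤ M

namespace BddMeasurable

variable {φ χ : I01 → ℝ}

lemma integrable (hφ : BddMeasurable φ) (ρ : Measure I01) [IsFiniteMeasure ρ] :
    Integrable φ ρ := by
  obtain ⟨hm, M, hM⟩ := hφ
  exact (integrable_const M).mono' hm.aestronglyMeasurable (.of_forall hM)

lemma of_continuous (hφ : Continuous φ) : BddMeasurable φ := by
  obtain ⟨M, hM⟩ := isCompact_univ.exists_bound_of_continuousOn hφ.continuousOn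
  exact ⟨hφ.measurable, M, fun x => hM x (mem_univ x)⟩

lemma const (c : ℝ) : BddMeasurable fun _ => c :=
  ⟨measurable_const, |c|, fun _ => le_rfl⟩

lemma neg (hφ : BddMeasurable φ) : BddMeasurable fun x => -φ x :=
  ⟨hφ.1.neg, hφ.2.imp fun _ hM x => (abs_neg (φ x)).trans_le (hM x)⟩

lemma max_zero (hφ : BddMeasurable φ) : BddMeasurable fun x => max (φ x) 0 :=
  ⟨hφ.1.max measurable_const, hφ.2.imp fun _ hM x =>
    (by simpa using abs_max_sub_max_le_abs (φ x) 0 0 : |max (φ x) 0| ≤ |φ x|).trans (hM x)⟩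

lemma mul (hφ : BddMeasurable φ) (hχ : BddMeasurable χ) : BddMeasurable fun x => φ x * χ x := by
  obtain ⟨hm, M, hM⟩ := hφ
  obtain ⟨hm', M', hM'⟩ := hχ
  refine ⟨hm.mul hm', M * M', fun x => ?_⟩
  rw [abs_mul]
  exact mul_le_mul (hM x) (hM' x) (abs_nonneg _) ((abs_nonneg _).trans (hM x))

end BddMeasurable

section Pairing

variable {φ χ : I01 → ℝ}

lemma eq_jordan_posPart_sub_negPart (ν : SignedMeasure I01) :
    ν = ν.toJordanDecomposition.posPart.toSignedMeasure -
      ν.toJordanDecomposition.negPart.toSignedMeasure := by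
  conv_lhs => rw [← ν.toSignedMeasure_toJordanDecomposition]
  rfl

lemma pairSM_eq_integral_sub_integral {ν : SignedMeasure I01} (ρ₁ ρ₂ : Measure I01)
    [IsFiniteMeasure ρ₁] [IsFiniteMeasure ρ₂]
    (h : ν = ρ₁.toSignedMeasure - ρ₂.toSignedMeasure) (hφ : BddMeasurable φ) :
    pairSM ν φ = ∫ x, φ x ∂ρ₁ - ∫ x, φ x ∂ρ₂ := by
  set ρp := ν.toJordanDecomposition.posPart
  set ρn := ν.toJordanDecomposition.negPart
  have hsum : ρp + ρ₂ = ρ₁ + ρn := by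
    refine Measure.toSignedMeasure_eq_toSignedMeasure_iff.mp ?_
    rw [Measure.toSignedMeasure_add, Measure.toSignedMeasure_add, ← sub_eq_sub_iff_add_eq_add,
      ← eq_jordan_posPart_sub_negPart, h]
  have := congrArg (fun ρ => ∫ x, φ x ∂ρ) hsum
  simp only [integral_add_measure (hφ.integrable _) (hφ.integrable _)] at this
  simp only [pairSM]
  linarith

lemma pairSM_add_right (ν : SignedMeasure I01) (hφ : BddMeasurable φ) (hχ : BddMeasurable χ) :
    pairSM ν (fun x => φ x + χ x) = pairSM ν φ + pairSM ν χ := by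
  simp only [pairSM, integral_add (hφ.integrable _) (hχ.integrable _)]
  ring

lemma pairSM_const_mul_right (ν : SignedMeasure I01) (c : ℝ) (φ : I01 → ℝ) :
    pairSM ν (fun x => c * φ x) = c * pairSM ν φ := by
  simp only [pairSM, integral_const_mul]
  ring

lemma pairSM_sub_right (ν : SignedMeasure I01) (hφ : BddMeasurable φ) (hχ : BddMeasurable χ) :
    pairSM ν (fun x => φ x - χ x) = pairSM ν φ - pairSM ν χ := by
  simp only [pairSM, integral_sub (hφ.integrable _) (hχ.integrable _)]
  ring

lemma pairSM_sub_left (ν₁ ν₂ : SignedMeasure I01) (hφ : BddMeasurable φ) :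
    pairSM (ν₁ - ν₂) φ = pairSM ν₁ φ - pairSM ν₂ φ := by
  have h : ν₁ - ν₂ =
      (ν₁.toJordanDecomposition.posPart + ν₂.toJordanDecomposition.negPart).toSignedMeasure -
      (ν₁.toJordanDecomposition.negPart + ν₂.toJordanDecomposition.posPart).toSignedMeasure := by
    rw [Measure.toSignedMeasure_add, Measure.toSignedMeasure_add]
    conv_lhs => rw [eq_jordan_posPart_sub_negPart ν₁,
      eq_jordan_posPart_sub_negPart ν₂]
    abel
  rw [pairSM_eq_integral_sub_integral _ _ h hφ,
    integral_add_measure (hφ.integrable _) (hφ.integrable _),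
    integral_add_measure (hφ.integrable _) (hφ.integrable _)]
  simp only [pairSM]
  ring

lemma abs_pairSM_le (ν : SignedMeasure I01) {M : ℝ} (hM : ∀ x, |φ x| ≤ M) :
    |pairSM ν φ| ≤ M * tvNorm ν := by
  have hp := norm_integral_le_of_norm_le_const (μ := ν.toJordanDecomposition.posPart)
    (f := φ) (.of_forall hM)
  have hn := norm_integral_le_of_norm_le_const (μ := ν.toJordanDecomposition.negPart)
    (f := φ) (.of_forall hM)
  rw [tvNorm, SignedMeasure.totalVariation, Measure.add_apply,
    ENNReal.toReal_add (measure_ne_top _ _) (measure_ne_top _ _)]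
  simp only [Real.norm_eq_abs, measureReal_def] at hp hn
  exact (abs_sub _ _).trans (by rw [mul_add]; exact add_le_add hp hn)

lemma pairSM_indicator_one (ν : SignedMeasure I01) {A : Set I01} (hA : MeasurableSet A) :
    pairSM ν (A.indicator 1) = ν A := by
  conv_rhs => rw [eq_jordan_posPart_sub_negPart ν]
  rw [_root_.sub_apply, Measure.toSignedMeasure_apply_measurable hA,
    Measure.toSignedMeasure_apply_measurable hA, pairSM, integral_indicator_one hA,
    integral_indicator_one hA]

lemma pairSM_map (ν : SignedMeasure I01) {Φ : I01 → I01} (hΦ : Measurable Φ)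
    (hφ : BddMeasurable φ) :
    pairSM (ν.map Φ) φ = pairSM ν (φ ∘ Φ) := by
  have h : ν.map Φ = (ν.toJordanDecomposition.posPart.map Φ).toSignedMeasure -
      (ν.toJordanDecomposition.negPart.map Φ).toSignedMeasure := by
    ext A hA
    rw [VectorMeasure.map_apply _ hΦ hA, _root_.sub_apply,
      Measure.toSignedMeasure_apply_measurable hA, Measure.toSignedMeasure_apply_measurable hA,
      map_measureReal_apply hΦ hA, map_measureReal_apply hΦ hA]
    conv_lhs => rw [eq_jordan_posPart_sub_negPart ν]
    rw [_root_.sub_apply, Measure.toSignedMeasure_apply_measurable (hΦ hA),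
      Measure.toSignedMeasure_apply_measurable (hΦ hA)]
  rw [pairSM_eq_integral_sub_integral _ _ h hφ,
    integral_map hΦ.aemeasurable hφ.1.aestronglyMeasurable,
    integral_map hΦ.aemeasurable hφ.1.aestronglyMeasurable]
  rfl

lemma integral_withDensity_ofReal_sub_integral_withDensity_ofReal_neg {f : I01 → ℝ}
    (hf : BddMeasurable f) (hφ : BddMeasurable φ) (ρ : Measure I01) [IsFiniteMeasure ρ] :
    ∫ x, φ x ∂ρ.withDensity (fun x => ENNReal.ofReal (f x)) -
      ∫ x, φ x ∂ρ.withDensity (fun x => ENNReal.ofReal (-f x)) = ∫ x, f x * φ x ∂ρ := by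
  simp only [ENNReal.ofReal]
  rw [integral_withDensity_eq_integral_smul hf.1.real_toNNReal,
    integral_withDensity_eq_integral_smul (f := fun x => (-f x).toNNReal)
      hf.1.neg.real_toNNReal]
  simp only [NNReal.smul_def, Real.coe_toNNReal', smul_eq_mul]
  rw [← integral_sub ((hf.max_zero.mul hφ).integrable ρ) ((hf.neg.max_zero.mul hφ).integrable ρ)]
  congr 1 with x
  rw [← sub_mul, max_zero_sub_max_neg_zero_eq_self]

lemma pairSM_Ff {f : I01 → ℝ} (ν : SignedMeasure I01) (hf : BddMeasurable f)
    (hφ : BddMeasurable φ) :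
    pairSM (Ff f ν) φ = pairSM ν (fun x => f x * φ x) := by
  set ρp := ν.toJordanDecomposition.posPart
  set ρn := ν.toJordanDecomposition.negPart
  have hfp : Integrable f ρp := hf.integrable _
  have hfn : Integrable f ρn := hf.integrable _
  have := isFiniteMeasure_withDensity_ofReal hfp.2
  have := isFiniteMeasure_withDensity_ofReal hfp.neg.2
  have := isFiniteMeasure_withDensity_ofReal hfn.2
  have := isFiniteMeasure_withDensity_ofReal hfn.neg.2
  have h : Ff f ν = (ρp.withDensity (fun x => ENNReal.ofReal (f x)) +
        ρn.withDensity (fun x => ENNReal.ofReal (-f x))).toSignedMeasure -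
      (ρp.withDensity (fun x => ENNReal.ofReal (-f x)) +
        ρn.withDensity (fun x => ENNReal.ofReal (f x))).toSignedMeasure := by
    rw [Ff, withDensityᵥ_eq_withDensity_pos_part_sub_withDensity_neg_part hfp,
      withDensityᵥ_eq_withDensity_pos_part_sub_withDensity_neg_part hfn,
      Measure.toSignedMeasure_add, Measure.toSignedMeasure_add]
    abel
  rw [pairSM_eq_integral_sub_integral _ _ h hφ,
    integral_add_measure (hφ.integrable _) (hφ.integrable _),
    integral_add_measure (hφ.integrable _) (hφ.integrable _), pairSM,
    ← integral_withDensity_ofReal_sub_integral_withDensity_ofReal_neg hf hφ ρp,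
    ← integral_withDensity_ofReal_sub_integral_withDensity_ofReal_neg hf hφ ρn]
  ring

lemma tendsto_pairSM_of_dominated {ι : Type*} {l : Filter ι} [l.IsCountablyGenerated]
    {χs : ι → I01 → ℝ} (hm : ∀ i, Measurable (χs i)) {M : ℝ} (hM : ∀ i x, |χs i x| ≤ M)
    (hlim : ∀ x, Tendsto (fun i => χs i x) l (𝓝 (χ x))) (ν : SignedMeasure I01) :
    Tendsto (fun i => pairSM ν (χs i)) l (𝓝 (pairSM ν χ)) := by
  have key : ∀ (ρ : Measure I01) [IsFiniteMeasure ρ],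
      Tendsto (fun i => ∫ x, χs i x ∂ρ) l (𝓝 (∫ x, χ x ∂ρ)) := fun ρ _ =>
    tendsto_integral_filter_of_dominated_convergence (fun _ => M)
      (.of_forall fun i => (hm i).aestronglyMeasurable) (.of_forall fun i => .of_forall (hM i))
      (integrable_const M) (.of_forall hlim)
  exact (key _).sub (key _)

end Pairing

def BLContinuousOn {α : Type*} [TopologicalSpace α] (μ : α → SignedMeasure I01) (S : Set α) :
    Prop :=
  ∀ t₀ ∈ S, Tendsto (fun t => dualBLNorm (μ t - μ t₀)) (𝓝[S] t₀) (𝓝 0)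

section DualBL

variable {χ : I01 → ℝ}

lemma bddAbove_dualBLNorm_set (ν : SignedMeasure I01) :
    BddAbove {r : ℝ | ∃ φ : I01 → ℝ, Continuous φ ∧ blNorm φ ≤ 1 ∧ r = |pairSM ν φ|} := by
  refine ⟨tvNorm ν, ?_⟩
  rintro r ⟨φ, hc, hbl, rfl⟩
  obtain ⟨M, hM⟩ := (BddMeasurable.of_continuous hc).2
  have hsup : ∀ x, |φ x| ≤ supNorm φ := fun x =>
    le_ciSup (f := fun x => |φ x|) ⟨M, by rintro _ ⟨y, rfl⟩; exact hM y⟩ x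
  have hlip : 0 ≤ lipConst φ := Real.sInf_nonneg fun K hK => hK.1
  calc |pairSM ν φ| ≤ supNorm φ * tvNorm ν := abs_pairSM_le ν hsup
    _ ≤ 1 * tvNorm ν := by
      gcongr
      · exact ENNReal.toReal_nonneg
      · rw [blNorm] at hbl; linarith
    _ = tvNorm ν := one_mul _

/-- `(M + K + 1)⁻¹ • χ` has bounded-Lipschitz norm at most one. -/
lemma abs_pairSM_le_dualBLNorm (ν : SignedMeasure I01) {K : ℝ≥0} (hχ : LipschitzWith K χ)
    {M : ℝ} (hM0 : 0 ≤ M) (hM : ∀ x, |χ x| ≤ M) :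
    |pairSM ν χ| ≤ (M + K + 1) * dualBLNorm ν := by
  set B : ℝ := M + K + 1
  have hB : 0 < B := by positivity
  have hsup : supNorm (fun x => B⁻¹ * χ x) ≤ B⁻¹ * M := ciSup_le fun x => by
    rw [abs_mul, abs_of_pos (inv_pos.2 hB)]
    exact mul_le_mul_of_nonneg_left (hM x) (inv_pos.2 hB).le
  have hlip : lipConst (fun x => B⁻¹ * χ x) ≤ B⁻¹ * K := by
    refine csInf_le ⟨0, fun K hK => hK.1⟩ ⟨by positivity, fun x y => ?_⟩
    rw [← mul_sub, abs_mul, abs_of_pos (inv_pos.2 hB), mul_assoc, ← Real.dist_eq]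
    exact mul_le_mul_of_nonneg_left (hχ.dist_le_mul x y) (inv_pos.2 hB).le
  have hbl : blNorm (fun x => B⁻¹ * χ x) ≤ 1 := by
    have : B⁻¹ * M + B⁻¹ * K ≤ 1 := by
      rw [← mul_add, inv_mul_le_iff₀ hB]
      linarith
    rw [blNorm]
    linarith
  have hle : |pairSM ν (fun x => B⁻¹ * χ x)| ≤ dualBLNorm ν :=
    le_csSup (bddAbove_dualBLNorm_set ν) ⟨_, continuous_const.mul hχ.continuous, hbl, rfl⟩
  rw [pairSM_const_mul_right, abs_mul, abs_of_pos (inv_pos.2 hB), inv_mul_le_iff₀ hB] at hle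
  exact hle

lemma continuousOn_pairSM {α : Type*} [TopologicalSpace α] {μ : α → SignedMeasure I01}
    {S : Set α} (hμ : BLContinuousOn μ S) {K : ℝ≥0} (hχ : LipschitzWith K χ) :
    ContinuousOn (fun t => pairSM (μ t) χ) S := by
  intro t₀ ht₀
  obtain ⟨M, hM⟩ := (BddMeasurable.of_continuous hχ.continuous).2
  have hM0 : 0 ≤ M := (abs_nonneg _).trans (hM (Classical.arbitrary I01))
  rw [ContinuousWithinAt, ← tendsto_sub_nhds_zero_iff]
  refine squeeze_zero_norm (fun t => ?_) (by simpa using (hμ t₀ ht₀).const_mul (M + K + 1))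
  rw [Real.norm_eq_abs, ← pairSM_sub_left _ _ (.of_continuous hχ.continuous)]
  exact abs_pairSM_le_dualBLNorm _ hχ hM0 hM

end DualBL

section Measurability

variable {α : Type*} [MeasurableSpace α]

lemma measurable_apply_of_forall_isClosed {X : Type*} [TopologicalSpace X] [MeasurableSpace X]
    [BorelSpace X] {μ : α → SignedMeasure X} (h : ∀ C, IsClosed C → Measurable fun a => μ a C)
    {A : Set X} (hA : MeasurableSet A) : Measurable fun a => μ a A := by
  refine MeasurableSpace.induction_on_inter (C := fun A _ => Measurable fun a => μ a A)
    (BorelSpace.measurable_eq.trans borel_eq_generateFrom_isClosed)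
    (fun _ hs _ ht _ => hs.inter ht) (by simp) h ?_ ?_ A hA
  · intro A hA ihA
    simp_rw [VectorMeasure.of_compl hA]
    exact (h univ isClosed_univ).sub ihA
  · intro A hdisj hA ihA
    exact measurable_of_tendsto_metrizable (fun n => Finset.measurable_sum _ fun i _ => ihA i)
      (tendsto_pi_nhds.2 fun a =>
        (VectorMeasure.hasSum_of_disjoint_iUnion hA hdisj).tendsto_sum_nat)

variable {μ : α → SignedMeasure I01}

lemma measurable_pairSM_of_measurable_apply
    (h : ∀ A, MeasurableSet A → Measurable fun a => μ a A) {χ : I01 → ℝ}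
    (hχ : BddMeasurable χ) : Measurable fun a => pairSM (μ a) χ := by
  have hsimple : ∀ g : SimpleFunc I01 ℝ, Measurable fun a => pairSM (μ a) g := by
    intro g
    induction g using SimpleFunc.induction with
    | @const c A hA =>
      have : ⇑(SimpleFunc.piecewise A hA (SimpleFunc.const I01 c) (SimpleFunc.const I01 0)) =
          fun x => c * A.indicator 1 x := by
        ext x
        by_cases hx : x ∈ A <;> simp [hx]
      simp_rw [this, pairSM_const_mul_right, pairSM_indicator_one _ hA]
      exact (h A hA).const_mul c
    | @add f g _ hf hg =>
      have hbdd : ∀ g : SimpleFunc I01 ℝ, BddMeasurable g := fun g =>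
        ⟨g.measurable, g.exists_forall_norm_le⟩
      have hfg : ⇑(f + g) = fun x => f x + g x := rfl
      simp_rw [hfg, pairSM_add_right _ (hbdd f) (hbdd g)]
      exact hf.add hg
  obtain ⟨hm, M, hM⟩ := hχ
  have hM0 : 0 ≤ M := (abs_nonneg _).trans (hM (Classical.arbitrary I01))
  have hsm := hm.stronglyMeasurable
  exact measurable_of_tendsto_metrizable (fun n => hsimple (hsm.approxBounded M n))
    (tendsto_pi_nhds.2 fun a => tendsto_pairSM_of_dominated
      (fun n => (hsm.approxBounded M n).measurable) (hsm.norm_approxBounded_le hM0)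
      (fun x => hsm.tendsto_approxBounded_of_norm_le (hM x)) (μ a))

lemma measurable_apply_isClosed_of_lipschitz
    (h : ∀ (K : ℝ≥0) (χ : I01 → ℝ), LipschitzWith K χ → Measurable fun a => pairSM (μ a) χ)
    {C : Set I01} (hC : IsClosed C) : Measurable fun a => μ a C := by
  have hδ : ∀ n : ℕ, (0 : ℝ) < 1 / (n + 1) := fun n => Nat.one_div_pos_of_nat
  set χs : ℕ → I01 → ℝ := fun n x => thickenedIndicator (hδ n) C x
  have hlim : ∀ x, Tendsto (fun n => χs n x) atTop (𝓝 (C.indicator 1 x)) := by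
    intro x
    have := tendsto_pi_nhds.1 (thickenedIndicator_tendsto_indicator_closure hδ
      tendsto_one_div_add_atTop_nhds_zero_nat C) x
    rw [hC.closure_eq] at this
    convert NNReal.tendsto_coe.2 this using 2
    by_cases hx : x ∈ C <;> simp [hx]
  have hbdd : ∀ n x, |χs n x| ≤ 1 := fun n x => by
    simpa [χs] using thickenedIndicator_le_one (hδ n) C x
  have hlip : ∀ n : ℕ, LipschitzWith (1 * (1 / ((n : ℝ) + 1)).toNNReal⁻¹) (χs n) := fun n =>
    NNReal.isometry_coe.lipschitz.comp (lipschitzWith_thickenedIndicator (hδ n) C)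
  simp_rw [← pairSM_indicator_one _ hC.measurableSet]
  exact measurable_of_tendsto_metrizable (fun n => h _ _ (hlip n))
    (tendsto_pi_nhds.2 fun a => tendsto_pairSM_of_dominated
      (fun n => (hlip n).continuous.measurable) hbdd hlim (μ a))

lemma measurable_pairSM_of_lipschitz
    (h : ∀ (K : ℝ≥0) (χ : I01 → ℝ), LipschitzWith K χ → Measurable fun a => pairSM (μ a) χ)
    {χ : I01 → ℝ} (hχ : BddMeasurable χ) : Measurable fun a => pairSM (μ a) χ :=
  measurable_pairSM_of_measurable_apply
    (fun _ hA => measurable_apply_of_forall_isClosed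
      (fun _ hC => measurable_apply_isClosed_of_lipschitz h hC) hA) hχ

lemma measurable_uncurry_pairSM {ι : Type*} [TopologicalSpace ι]
    [TopologicalSpace.MetrizableSpace ι] [SecondCountableTopology ι] [MeasurableSpace ι]
    [OpensMeasurableSpace ι]
    (hμ : ∀ χ, BddMeasurable χ → Measurable fun a => pairSM (μ a) χ) {χ : ι → I01 → ℝ}
    (hm : ∀ i, Measurable (χ i)) (hc : ∀ x, Continuous fun i => χ i x) {M : ℝ}
    (hM : ∀ i x, |χ i x| ≤ M) :
    Measurable (Function.uncurry fun i a => pairSM (μ a) (χ i)) :=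
  measurable_uncurry_of_continuous_of_measurable
    (fun a => continuous_iff_continuousAt.2 fun _ =>
      tendsto_pairSM_of_dominated hm hM (fun x => (hc x).continuousAt) (μ a))
    (fun i => hμ _ ⟨hm i, M, hM i⟩)

end Measurability

lemma measurableSet_triangle (a b : ℝ) :
    MeasurableSet {p : ℝ × ℝ | a ≤ p.1 ∧ p.1 ≤ p.2 ∧ p.2 ≤ b} :=
  (measurableSet_le measurable_const measurable_fst).inter
    ((measurableSet_le measurable_fst measurable_snd).inter
      (measurableSet_le measurable_snd measurable_const))

lemma intervalIntegral_integral_triangle_swap {a b : ℝ} (hab : a ≤ b) {H : ℝ → ℝ → ℝ}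
    (hH : IntegrableOn (Function.uncurry H) {p | a ≤ p.1 ∧ p.1 ≤ p.2 ∧ p.2 ≤ b}) :
    IntervalIntegrable (fun s => ∫ t in s..b, H s t) volume a b ∧
      IntervalIntegrable (fun t => ∫ s in a..t, H s t) volume a b ∧
      ∫ s in a..b, ∫ t in s..b, H s t = ∫ t in a..b, ∫ s in a..t, H s t := by
  set Δ : Set (ℝ × ℝ) := {p | a ≤ p.1 ∧ p.1 ≤ p.2 ∧ p.2 ≤ b}
  have hΔ : MeasurableSet Δ := measurableSet_triangle a b
  set K := Δ.indicator (Function.uncurry H)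
  have hK : Integrable K (volume.prod volume) := by
    rw [← Measure.volume_eq_prod]; exact hH.integrable_indicator hΔ
  have hrow : ∀ s, ∫ t, K (s, t) = (Icc a b).indicator (fun s => ∫ t in s..b, H s t) s := by
    intro s
    by_cases hs : s ∈ Icc a b
    · have : (fun t => K (s, t)) = (Icc s b).indicator (H s) := by
        ext t; by_cases ht : t ∈ Icc s b <;> simp_all [K, Δ, indicator]
      rw [indicator_of_mem hs, this, integral_indicator measurableSet_Icc,
        integral_Icc_eq_integral_Ioc, intervalIntegral.integral_of_le hs.2]
    · have : ∀ t, K (s, t) = 0 := fun t =>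
        indicator_of_notMem (fun h => hs ⟨h.1, h.2.1.trans h.2.2⟩) _
      simp [this, indicator_of_notMem hs]
  have hcol : ∀ t, ∫ s, K (s, t) = (Icc a b).indicator (fun t => ∫ s in a..t, H s t) t := by
    intro t
    by_cases ht : t ∈ Icc a b
    · have : (fun s => K (s, t)) = (Icc a t).indicator (fun s => H s t) := by
        ext s; by_cases hs : s ∈ Icc a t <;> simp_all [K, Δ, indicator]
      rw [indicator_of_mem ht, this, integral_indicator measurableSet_Icc,
        integral_Icc_eq_integral_Ioc, intervalIntegral.integral_of_le ht.1]
    · have : ∀ s, K (s, t) = 0 := fun s =>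
        indicator_of_notMem (fun h => ht ⟨h.1.trans h.2.1, h.2.2⟩) _
      simp [this, indicator_of_notMem ht]
  have hrowI := hK.integral_prod_left
  have hcolI := hK.integral_prod_right
  simp_rw [hrow] at hrowI
  simp_rw [hcol] at hcolI
  rw [integrable_indicator_iff measurableSet_Icc] at hrowI hcolI
  refine ⟨(intervalIntegrable_iff_integrableOn_Icc_of_le hab).2 hrowI,
    (intervalIntegrable_iff_integrableOn_Icc_of_le hab).2 hcolI, ?_⟩
  have := integral_integral_swap (f := fun s t => K (s, t)) hK
  simp_rw [hrow, hcol, integral_indicator measurableSet_Icc, integral_Icc_eq_integral_Ioc,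
    ← intervalIntegral.integral_of_le hab] at this
  exact this

/-- Extending the integrand to all times by `projIcc` makes it jointly measurable
(Carathéodory) without changing it on `[a, b]`. -/
lemma intervalIntegral_pairSM_comm {a b : ℝ} (hab : a ≤ b) (σ : SignedMeasure I01)
    {u : ℝ → I01 → ℝ} (hut : ∀ y, ContinuousOn (fun t => u t y) (Icc a b))
    (huy : ∀ t ∈ Icc a b, Continuous (u t)) {M : ℝ} (hM : ∀ t ∈ Icc a b, ∀ y, |u t y| ≤ M) :
    ∫ t in a..b, pairSM σ (u t) = pairSM σ (fun y => ∫ t in a..b, u t y) := by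
  set ū : ℝ → I01 → ℝ := fun t => u (projIcc a b hab t)
  have hū : ∀ t ∈ uIcc a b, ū t = u t := fun t ht => by
    rw [uIcc_of_le hab] at ht
    simp [ū, projIcc_of_mem hab ht]
  have hūm : Measurable (Function.uncurry ū) :=
    measurable_uncurry_of_continuous_of_measurable
      (fun y => (hut y).comp_continuous (continuous_subtype_val.comp continuous_projIcc)
        fun t => (projIcc a b hab t).2)
      (fun t => (huy _ (projIcc a b hab t).2).measurable)
  have hūM : ∀ t y, |ū t y| ≤ M := fun t y => hM _ (projIcc a b hab t).2 y
  have : IsFiniteMeasure (volume.restrict (uIoc a b)) :=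
    isFiniteMeasure_restrict.2 (by simp [uIoc_of_le hab])
  have hint : ∀ (ρ : Measure I01) [IsFiniteMeasure ρ],
      Integrable (Function.uncurry ū) ((volume.restrict (uIoc a b)).prod ρ) := fun ρ _ =>
    (integrable_const M).mono' hūm.aestronglyMeasurable (.of_forall fun p => hūM p.1 p.2)
  have hswap : ∀ (ρ : Measure I01) [IsFiniteMeasure ρ],
      ∫ t in a..b, ∫ y, ū t y ∂ρ = ∫ y, (∫ t in a..b, ū t y) ∂ρ := fun ρ _ =>
    intervalIntegral_integral_swap (hint ρ)
  have hii : ∀ (ρ : Measure I01) [IsFiniteMeasure ρ],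
      IntervalIntegrable (fun t => ∫ y, ū t y ∂ρ) volume a b := fun ρ _ =>
    (intervalIntegrable_iff.2 (hint ρ).integral_prod_left)
  have hrhs : (fun y => ∫ t in a..b, u t y) = fun y => ∫ t in a..b, ū t y :=
    funext fun y => intervalIntegral.integral_congr fun t ht => by simp [hū t ht]
  rw [← intervalIntegral.integral_congr fun t ht => congrArg (pairSM σ) (hū t ht), hrhs]
  simp only [pairSM]
  rw [intervalIntegral.integral_sub (hii _) (hii _), hswap, hswap]

lemma HasFDerivWithinAt.hasDerivAt_comp_graph {ψ : ℝ → ℝ → ℝ} {a b : ℝ} {s : Set (ℝ × ℝ)}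
    {x : ℝ → ℝ} {t w : ℝ}
    (hψ : HasFDerivWithinAt (fun p : ℝ × ℝ => ψ p.1 p.2)
      (a • ContinuousLinearMap.fst ℝ ℝ ℝ + b • ContinuousLinearMap.snd ℝ ℝ ℝ) s (x t, t))
    (hx : HasDerivAt x w t) (hs : ∀ᶠ t' in 𝓝 t, (x t', t') ∈ s) :
    HasDerivAt (fun t' => ψ (x t') t') (a * w + b) t := by
  have h := (hψ.comp_hasDerivWithinAt (f := fun t' => (x t', t')) t
    ((hx.prodMk (hasDerivAt_id t)).hasDerivWithinAt (s := {t' | (x t', t') ∈ s}))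
    fun _ ht' => ht').hasDerivAt hs
  simp only [add_apply, smul_apply,
    ContinuousLinearMap.coe_fst', ContinuousLinearMap.coe_snd', smul_eq_mul, mul_one] at h
  exact h

lemma ContinuousOn.uncurry_comp_coe {θ : ℝ → ℝ → ℝ} {S : Set ℝ}
    (hθ : ContinuousOn (fun p : ℝ × ℝ => θ p.1 p.2) (Icc (0:ℝ) 1 ×ˢ S)) :
    ContinuousOn (Function.uncurry fun (x : I01) t => θ x t) (univ ×ˢ S) :=
  hθ.comp (continuous_subtype_val.prodMap continuous_id).continuousOn fun p hp => ⟨p.1.2, hp.2⟩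

namespace StoppedFlow

variable (F : StoppedFlow)

lemma continuousOn_materialDerivative {T : ℝ} {ψx ψt : ℝ → ℝ → ℝ}
    (hψx : ContinuousOn (fun p : ℝ × ℝ => ψx p.1 p.2) (Icc (0:ℝ) 1 ×ˢ Icc (0:ℝ) T))
    (hψt : ContinuousOn (fun p : ℝ × ℝ => ψt p.1 p.2) (Icc (0:ℝ) 1 ×ˢ Icc (0:ℝ) T))
    (hv : Continuous F.v) :
    ContinuousOn (Function.uncurry fun (x : I01) t => ψt x t + ψx x t * F.v x)
      (univ ×ˢ Icc 0 T) :=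
  hψt.uncurry_comp_coe.add (hψx.uncurry_comp_coe.mul (hv.comp continuous_fst).continuousOn)

lemma continuousOn_along {T a : ℝ} {Θ : I01 → ℝ → ℝ}
    (hΘ : ContinuousOn (Function.uncurry Θ) (univ ×ˢ Icc 0 T)) (ha : 0 ≤ a) (y : I01) :
    ContinuousOn (fun t => Θ (F.Φ (t - a) y) t) (Icc a T) :=
  hΘ.comp (((F.cont_t y).comp (continuous_sub_right a)).prodMk continuous_id).continuousOn
    fun _ ht => ⟨mem_univ _, ha.trans ht.1, ht.2⟩

lemma continuous_comp_flow {T r t : ℝ} {Θ : I01 → ℝ → ℝ}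
    (hΘ : ContinuousOn (Function.uncurry Θ) (univ ×ˢ Icc 0 T)) (hr : 0 ≤ r)
    (ht : t ∈ Icc 0 T) : Continuous fun y => Θ (F.Φ r y) t :=
  hΘ.comp_continuous ((F.cont_y r hr).prodMk continuous_const) fun _ => ⟨mem_univ _, ht⟩

lemma hasDerivAt_or_frozen_at_boundary (y : I01) {s : ℝ} (hs : 0 ≤ s)
    (hsτ : s ≠ (F.τ y).toReal) :
    HasDerivAt (fun r => (F.Φ r y : ℝ)) (F.v (F.Φ s y)) s ∨
      HasDerivAt (fun r => (F.Φ r y : ℝ)) 0 s ∧ ((F.Φ s y : ℝ) = 0 ∨ (F.Φ s y : ℝ) = 1) := by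
  by_cases hlt : ENNReal.ofReal s < F.τ y
  · exact .inl (F.ode y s hs hlt)
  have hτs : F.τ y ≤ ENNReal.ofReal s := not_lt.1 hlt
  have hτ : F.τ y ≠ ⊤ := ne_top_of_le_ne_top ENNReal.ofReal_ne_top hτs
  have hτ_lt : (F.τ y).toReal < s :=
    lt_of_le_of_ne ((ENNReal.toReal_le_toReal hτ ENNReal.ofReal_ne_top).2 hτs |>.trans_eq
      (ENNReal.toReal_ofReal hs)) hsτ.symm
  have hfrozen : (fun r => (F.Φ r y : ℝ)) =ᶠ[𝓝 s] fun _ => (F.Φ (F.τ y).toReal y : ℝ) := by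
    filter_upwards [Ioi_mem_nhds hτ_lt] with r hr
    rw [F.frozen y _ r (ENNReal.ofReal_toReal hτ).ge hr.le]
  refine .inr ⟨(hasDerivAt_const s _).congr_of_eventuallyEq hfrozen, F.stopped y s hτs⟩

/-- The no-flux condition `ψx = 0` at `0` and `1` is what makes the frozen part of a
trajectory contribute `ψt` only. -/
lemma integral_eq_sub_along {T : ℝ} {ψ ψx ψt : ℝ → ℝ → ℝ}
    (hψ : ∀ x ∈ Icc (0:ℝ) 1, ∀ t ∈ Icc (0:ℝ) T,
      HasFDerivWithinAt (fun p : ℝ × ℝ => ψ p.1 p.2)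
        ((ψx x t) • (ContinuousLinearMap.fst ℝ ℝ ℝ) + (ψt x t) • (ContinuousLinearMap.snd ℝ ℝ ℝ))
        (Icc (0:ℝ) 1 ×ˢ Icc (0:ℝ) T) (x, t))
    (hψx : ContinuousOn (fun p : ℝ × ℝ => ψx p.1 p.2) (Icc (0:ℝ) 1 ×ˢ Icc (0:ℝ) T))
    (hψt : ContinuousOn (fun p : ℝ × ℝ => ψt p.1 p.2) (Icc (0:ℝ) 1 ×ˢ Icc (0:ℝ) T))
    (hbc : ∀ t ∈ Icc (0:ℝ) T, ψx 0 t = 0 ∧ ψx 1 t = 0) (hv : Continuous F.v)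
    {a : ℝ} (ha : a ∈ Icc 0 T) (y : I01) :
    ∫ t in a..T, (ψt (F.Φ (t - a) y) t + ψx (F.Φ (t - a) y) t * F.v (F.Φ (t - a) y)) =
      ψ (F.Φ (T - a) y) T - ψ y a := by
  have hψc : ContinuousOn (fun p : ℝ × ℝ => ψ p.1 p.2) (Icc (0:ℝ) 1 ×ˢ Icc (0:ℝ) T) :=
    fun p hp => (hψ p.1 hp.1 p.2 hp.2).continuousWithinAt
  have hint := F.continuousOn_along (F.continuousOn_materialDerivative hψx hψt hv) ha.1 y
  rw [integral_eq_of_hasDerivAt_off_countable_of_le (fun t => ψ (F.Φ (t - a) y) t) _ ha.2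
    (countable_singleton (a + (F.τ y).toReal)) (F.continuousOn_along hψc.uncurry_comp_coe ha.1 y) ?_
    (hint.intervalIntegrable_of_Icc ha.2), sub_self, F.init]
  rintro t ⟨ht, hτ⟩
  have hnear : ∀ᶠ t' in 𝓝 t, ((F.Φ (t' - a) y : ℝ), t') ∈ Icc (0:ℝ) 1 ×ˢ Icc (0:ℝ) T := by
    filter_upwards [Ioo_mem_nhds ht.1 ht.2] with t' ht'
    exact ⟨(F.Φ (t' - a) y).2, ha.1.trans ht'.1.le, ht'.2.le⟩
  have hψt' := hψ _ (F.Φ (t - a) y).2 t ⟨ha.1.trans ht.1.le, ht.2.le⟩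
  rcases F.hasDerivAt_or_frozen_at_boundary y (sub_nonneg.2 ht.1.le)
    (fun h => hτ (by simp [← h])) with hd | ⟨hd, hb⟩
  · simpa [add_comm] using hψt'.hasDerivAt_comp_graph (hd.comp_sub_const t a) hnear
  · have h0 : ψx (F.Φ (t - a) y) t = 0 := by
      have hbct := hbc t ⟨ha.1.trans ht.1.le, ht.2.le⟩
      rcases hb with hb | hb <;> rw [hb]
      exacts [hbct.1, hbct.2]
    simpa [h0] using hψt'.hasDerivAt_comp_graph (hd.comp_sub_const t a) hnear

lemma pairSM_map_sub_pairSM_eq_integral {T : ℝ} {ψ ψx ψt : ℝ → ℝ → ℝ}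
    (hψ : ∀ x ∈ Icc (0:ℝ) 1, ∀ t ∈ Icc (0:ℝ) T,
      HasFDerivWithinAt (fun p : ℝ × ℝ => ψ p.1 p.2)
        ((ψx x t) • (ContinuousLinearMap.fst ℝ ℝ ℝ) + (ψt x t) • (ContinuousLinearMap.snd ℝ ℝ ℝ))
        (Icc (0:ℝ) 1 ×ˢ Icc (0:ℝ) T) (x, t))
    (hψx : ContinuousOn (fun p : ℝ × ℝ => ψx p.1 p.2) (Icc (0:ℝ) 1 ×ˢ Icc (0:ℝ) T))
    (hψt : ContinuousOn (fun p : ℝ × ℝ => ψt p.1 p.2) (Icc (0:ℝ) 1 ×ˢ Icc (0:ℝ) T))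
    (hbc : ∀ t ∈ Icc (0:ℝ) T, ψx 0 t = 0 ∧ ψx 1 t = 0) (hv : Continuous F.v)
    (σ : SignedMeasure I01) {a : ℝ} (ha : a ∈ Icc 0 T) :
    pairSM (σ.map (F.Φ (T - a))) (fun x => ψ x T) - pairSM σ (fun x => ψ x a) =
      ∫ t in a..T, pairSM (σ.map (F.Φ (t - a))) (fun x => ψt x t + ψx x t * F.v x) := by
  have hψc : ContinuousOn (Function.uncurry fun (x : I01) t => ψ x t) (univ ×ˢ Icc 0 T) :=
    ContinuousOn.uncurry_comp_coe fun p hp => (hψ p.1 hp.1 p.2 hp.2).continuousWithinAt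
  have hW := F.continuousOn_materialDerivative hψx hψt hv
  obtain ⟨M, hM⟩ := (isCompact_univ.prod isCompact_Icc).exists_bound_of_continuousOn hW
  have hmap : ∀ {Θ : I01 → ℝ → ℝ}, ContinuousOn (Function.uncurry Θ) (univ ×ˢ Icc 0 T) →
      ∀ t ∈ Icc a T, pairSM (σ.map (F.Φ (t - a))) (fun x => Θ x t) =
        pairSM σ (fun y => Θ (F.Φ (t - a) y) t) := fun hΘ t ht =>
    pairSM_map σ (F.cont_y _ (sub_nonneg.2 ht.1)).measurable
      (.of_continuous (continuousOn_univ.1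
        (hΘ.uncurry_right t (show t ∈ Icc 0 T from ⟨ha.1.trans ht.1, ht.2⟩))))
  rw [hmap hψc T ⟨ha.2, le_rfl⟩, intervalIntegral.integral_congr fun t ht =>
      hmap hW t (by rwa [uIcc_of_le ha.2] at ht),
    intervalIntegral_pairSM_comm ha.2 σ (F.continuousOn_along hW ha.1)
      (fun t ht => F.continuous_comp_flow hW (sub_nonneg.2 ht.1) ⟨ha.1.trans ht.1, ht.2⟩)
      (fun t ht y => hM (F.Φ (t - a) y, t) ⟨mem_univ _, ha.1.trans ht.1, ht.2⟩),
    ← pairSM_sub_right σ (.of_continuous (F.continuous_comp_flow hψc (sub_nonneg.2 ha.2)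
      ⟨ha.1.trans ha.2, le_rfl⟩)) (.of_continuous (continuousOn_univ.1 (hψc.uncurry_right a ha)))]
  congr 1 with y
  exact (F.integral_eq_sub_along hψ hψx hψt hbc hv ha y).symm

end StoppedFlow

section FlowPairing

variable {T : ℝ} {μ : ℝ → SignedMeasure I01} {g : I01 → ℝ} {Θ : I01 → ℝ → ℝ}

/-- Clamping all times into `[0, T]` turns the pairing into a jointly measurable function
(Carathéodory) without changing it where the times already lie in `[0, T]`. -/
lemma integrableOn_pairSM_comp (hT : 0 ≤ T) (hμ : BLContinuousOn μ (Icc 0 T))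
    (hbdd : ∃ C, ∀ t ∈ Icc 0 T, tvNorm (μ t) ≤ C) (hg : BddMeasurable g)
    (hΘ : ContinuousOn (Function.uncurry Θ) (univ ×ˢ Icc 0 T)) {Φ : ℝ → I01 → I01}
    (hΦt : ∀ y, Continuous fun r => Φ r y) (hΦy : ∀ r, 0 ≤ r → Continuous (Φ r))
    {X : Type*} [MeasurableSpace X] {ν : Measure X} {S : Set X} (hS : MeasurableSet S)
    (hνS : ν S ≠ ⊤) {r t s : X → ℝ} (hr : Measurable r) (ht : Measurable t) (hs : Measurable s)
    (hmem : ∀ x ∈ S, 0 ≤ r x ∧ t x ∈ Icc 0 T ∧ s x ∈ Icc 0 T) :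
    IntegrableOn (fun x => pairSM (μ (s x)) (fun y => g y * Θ (Φ (r x) y) (t x))) S ν := by
  set π : ℝ → ℝ := fun t => projIcc 0 T hT t
  have hπ : Continuous π := continuous_subtype_val.comp continuous_projIcc
  have hπmem : ∀ t, π t ∈ Icc 0 T := fun t => (projIcc 0 T hT t).2
  have hπeq : ∀ t ∈ Icc 0 T, π t = t := fun t ht => by simp [π, projIcc_of_mem hT ht]
  have hμπ : ∀ χ, BddMeasurable χ → Measurable fun a => pairSM (μ (π a)) χ :=
    fun _ => measurable_pairSM_of_lipschitz fun _ _ hχ =>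
      ((continuousOn_pairSM hμ hχ).comp_continuous hπ hπmem).measurable
  obtain ⟨C, hC⟩ := hbdd
  obtain ⟨Mg, hMg⟩ := hg.2
  obtain ⟨MΘ, hMΘ⟩ := (isCompact_univ.prod isCompact_Icc).exists_bound_of_continuousOn hΘ
  set χ : ℝ × ℝ → I01 → ℝ := fun p y => g y * Θ (Φ (max p.1 0) y) (π p.2)
  have hχM : ∀ p y, |χ p y| ≤ Mg * MΘ := fun p y => by
    rw [abs_mul]
    exact mul_le_mul (hMg y) (hMΘ (Φ (max p.1 0) y, π p.2) ⟨mem_univ _, hπmem _⟩) (abs_nonneg _)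
      ((abs_nonneg _).trans (hMg y))
  have hjoint := measurable_uncurry_pairSM hμπ (χ := χ)
    (fun p => hg.1.mul (hΘ.comp_continuous ((hΦy _ (le_max_right _ _)).prodMk continuous_const)
      fun _ => ⟨mem_univ _, hπmem _⟩).measurable)
    (fun y => continuous_const.mul (hΘ.comp_continuous
      (((hΦt y).comp (continuous_fst.max continuous_const)).prodMk (hπ.comp continuous_snd))
      fun _ => ⟨mem_univ _, hπmem _⟩)) hχM
  have hclamped : IntegrableOn (fun x => pairSM (μ (π (s x))) (χ (r x, t x))) S ν :=
    Measure.integrableOn_of_bounded hνS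
      (hjoint.comp ((hr.prodMk ht).prodMk hs)).aestronglyMeasurable
      (M := Mg * MΘ * max C 0) (.of_forall fun x => (abs_pairSM_le _ (hχM _)).trans
        (mul_le_mul_of_nonneg_left ((hC _ (hπmem _)).trans (le_max_left _ _))
          ((abs_nonneg _).trans (hχM (0, 0) (Classical.arbitrary I01)))))
  refine hclamped.congr_fun (fun x hx => ?_) hS
  obtain ⟨hr0, htT, hsT⟩ := hmem x hx
  simp only [χ, hπeq _ htT, hπeq _ hsT, max_eq_left hr0]

lemma intervalIntegrable_pairSM (hT : 0 ≤ T) (hμ : BLContinuousOn μ (Icc 0 T))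
    (hbdd : ∃ C, ∀ t ∈ Icc 0 T, tvNorm (μ t) ≤ C)
    (hΘ : ContinuousOn (Function.uncurry Θ) (univ ×ˢ Icc 0 T)) :
    IntervalIntegrable (fun t => pairSM (μ t) fun x => Θ x t) volume 0 T := by
  refine (intervalIntegrable_iff_integrableOn_Icc_of_le hT).2 ?_
  simpa using integrableOn_pairSM_comp hT hμ hbdd (.const 1) hΘ (Φ := fun _ => id)
    (fun _ => continuous_const) (fun _ _ => continuous_id) measurableSet_Icc (by simp)
    measurable_const measurable_id measurable_id fun t ht => ⟨le_rfl, ht, ht⟩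

lemma intervalIntegrable_pairSM_Ff (hT : 0 ≤ T) (hμ : BLContinuousOn μ (Icc 0 T))
    (hbdd : ∃ C, ∀ t ∈ Icc 0 T, tvNorm (μ t) ≤ C) (hg : BddMeasurable g)
    (hΘ : ContinuousOn (Function.uncurry Θ) (univ ×ˢ Icc 0 T)) :
    IntervalIntegrable (fun t => pairSM (Ff g (μ t)) fun x => Θ x t) volume 0 T := by
  refine (intervalIntegrable_iff_integrableOn_Icc_of_le hT).2 ?_
  refine (integrableOn_pairSM_comp hT hμ hbdd hg hΘ (Φ := fun _ => id)
    (fun _ => continuous_const) (fun _ _ => continuous_id) measurableSet_Icc (by simp)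
    measurable_const measurable_id measurable_id fun t ht => ⟨le_rfl, ht, ht⟩).congr_fun
    (fun t ht => ?_) measurableSet_Icc
  exact (pairSM_Ff _ hg (.of_continuous (continuousOn_univ.1 (hΘ.uncurry_right t ht)))).symm

lemma StoppedFlow.integrableOn_pairSM_map_Ff (F : StoppedFlow) (hT : 0 ≤ T)
    (hμ : BLContinuousOn μ (Icc 0 T)) (hbdd : ∃ C, ∀ t ∈ Icc 0 T, tvNorm (μ t) ≤ C)
    (hg : BddMeasurable g) (hΘ : ContinuousOn (Function.uncurry Θ) (univ ×ˢ Icc 0 T)) :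
    IntegrableOn (Function.uncurry fun s t => pairSM ((Ff g (μ s)).map (F.Φ (t - s)))
      fun x => Θ x t) {p | 0 ≤ p.1 ∧ p.1 ≤ p.2 ∧ p.2 ≤ T} := by
  have hΔ : {p : ℝ × ℝ | 0 ≤ p.1 ∧ p.1 ≤ p.2 ∧ p.2 ≤ T} ⊆ Icc 0 T ×ˢ Icc 0 T :=
    fun p hp => ⟨⟨hp.1, hp.2.1.trans hp.2.2⟩, hp.1.trans hp.2.1, hp.2.2⟩
  refine (integrableOn_pairSM_comp hT hμ hbdd hg hΘ F.cont_t F.cont_y (measurableSet_triangle 0 T)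
    ((measure_mono hΔ).trans_lt (isCompact_Icc.prod isCompact_Icc).measure_lt_top).ne
    (measurable_snd.sub measurable_fst) measurable_snd measurable_fst
    fun p hp => ⟨sub_nonneg.2 hp.2.1, (hΔ hp).2, (hΔ hp).1⟩).congr_fun (fun p hp => ?_)
    (measurableSet_triangle 0 T)
  show pairSM (μ p.1) (fun y => g y * Θ (F.Φ (p.2 - p.1) y) p.2) =
    pairSM ((Ff g (μ p.1)).map (F.Φ (p.2 - p.1))) fun x => Θ x p.2
  have hslice := F.continuous_comp_flow hΘ (sub_nonneg.2 hp.2.1) (hΔ hp).2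
  rw [pairSM_map _ (F.cont_y _ (sub_nonneg.2 hp.2.1)).measurable
    (.of_continuous (continuousOn_univ.1 (hΘ.uncurry_right p.2 (hΔ hp).2)))]
  exact (pairSM_Ff _ hg (.of_continuous hslice)).symm

end FlowPairing

lemma integral_add_integral_eq_of_duhamel {T : ℝ} (hT : 0 ≤ T) {A B C E : ℝ → ℝ}
    {H : ℝ → ℝ → ℝ} (hB : IntervalIntegrable B volume 0 T)
    (hC : IntervalIntegrable C volume 0 T)
    (hH : IntegrableOn (Function.uncurry H) {p | 0 ≤ p.1 ∧ p.1 ≤ p.2 ∧ p.2 ≤ T})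
    (hE : ∀ s ∈ Icc 0 T, E s - C s = ∫ t in s..T, H s t)
    (hA : ∀ t ∈ Icc 0 T, B t = A t + ∫ s in 0..t, H s t) :
    (∫ t in 0..T, A t) + ∫ s in 0..T, E s = (∫ t in 0..T, B t) + ∫ s in 0..T, C s := by
  obtain ⟨hrow, hcol, hswap⟩ := intervalIntegral_integral_triangle_swap hT hH
  have hEint : ∫ s in 0..T, E s = (∫ s in 0..T, C s) + ∫ s in 0..T, ∫ t in s..T, H s t :=
    (intervalIntegral.integral_congr fun s hs => by
      rw [uIcc_of_le hT] at hs
      simp only [← hE s hs, add_sub_cancel]).trans (intervalIntegral.integral_add hC hrow)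
  have hAint : ∫ t in 0..T, A t = (∫ t in 0..T, B t) - ∫ t in 0..T, ∫ s in 0..t, H s t :=
    (intervalIntegral.integral_congr fun t ht => by
      rw [uIcc_of_le hT] at ht
      simp only [hA t ht, add_sub_cancel_right]).trans (intervalIntegral.integral_sub hB hcol)
  linarith

theorem mild_is_weak_fixed_velocity_general (F : StoppedFlow) (K : ℝ≥0) (hv : LipschitzWith K F.v)
    (T : ℝ) (hT : 0 < T)
    -- `f` piecewise bounded Lipschitz, discontinuities away from zeros of `v`
    (f : I01 → ℝ) (hfmeas : Measurable f) (Cf : ℝ)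
    (hfb : ∀ x, |f x| ≤ Cf)
    -- `μ` is the mild solution with initial value `ν₀`
    (ν₀ : SignedMeasure I01) (μ : ℝ → SignedMeasure I01)
    (hcont : ∀ t₀ ∈ Set.Icc (0:ℝ) T, Tendsto (fun t => dualBLNorm (μ t - μ t₀))
        (nhdsWithin t₀ (Set.Icc (0:ℝ) T)) (nhds 0))
    (hTVbdd : ∃ C : ℝ, ∀ t ∈ Set.Icc (0:ℝ) T, tvNorm (μ t) ≤ C)
    (hVOC : ∀ t ∈ Set.Icc (0:ℝ) T, ∀ φ : I01 → ℝ, Continuous φ →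
        pairSM (μ t) φ = pairSM (ν₀.map (F.Φ t)) φ +
          ∫ s in (0:ℝ)..t, pairSM ((Ff f (μ s)).map (F.Φ (t - s))) φ)
    -- test function
    (ψ ψx ψt : ℝ → ℝ → ℝ)
    (hψ : ∀ x ∈ Set.Icc (0:ℝ) 1, ∀ t ∈ Set.Icc (0:ℝ) T,
      HasFDerivWithinAt (fun p : ℝ × ℝ => ψ p.1 p.2)
        ((ψx x t) • (ContinuousLinearMap.fst ℝ ℝ ℝ) +
          (ψt x t) • (ContinuousLinearMap.snd ℝ ℝ ℝ))
        (Set.Icc (0:ℝ) 1 ×ˢ Set.Icc (0:ℝ) T) (x, t))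
    (hψx : ContinuousOn (fun p : ℝ × ℝ => ψx p.1 p.2) (Set.Icc (0:ℝ) 1 ×ˢ Set.Icc (0:ℝ) T))
    (hψt : ContinuousOn (fun p : ℝ × ℝ => ψt p.1 p.2) (Set.Icc (0:ℝ) 1 ×ˢ Set.Icc (0:ℝ) T))
    (hbc : ∀ t ∈ Set.Icc (0:ℝ) T, ψx 0 t = 0 ∧ ψx 1 t = 0)
    :
    pairSM (μ T) (fun x => ψ (x : ℝ) T) - pairSM ν₀ (fun x => ψ (x : ℝ) 0) =
      (∫ t in (0:ℝ)..T,
          pairSM (μ t) (fun x => ψt (x : ℝ) t + ψx (x : ℝ) t * F.v x)) +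
        ∫ t in (0:ℝ)..T, pairSM (Ff f (μ t)) (fun x => ψ (x : ℝ) t) := by
  have hT0 := hT.le
  have hf : BddMeasurable f := ⟨hfmeas, Cf, hfb⟩
  have hψc : ContinuousOn (Function.uncurry fun (x : I01) t => ψ x t) (univ ×ˢ Icc 0 T) :=
    ContinuousOn.uncurry_comp_coe fun p hp => (hψ p.1 hp.1 p.2 hp.2).continuousWithinAt
  have hW := F.continuousOn_materialDerivative hψx hψt hv.continuous
  have hchar := F.pairSM_map_sub_pairSM_eq_integral hψ hψx hψt hbc hv.continuous
  have hν₀ := hchar ν₀ ⟨le_rfl, hT0⟩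
  have hduhamel := integral_add_integral_eq_of_duhamel hT0
    (intervalIntegrable_pairSM hT0 hcont hTVbdd hW)
    (intervalIntegrable_pairSM_Ff hT0 hcont hTVbdd hf hψc)
    (F.integrableOn_pairSM_map_Ff hT0 hcont hTVbdd hf hW)
    (fun s hs => hchar (Ff f (μ s)) hs)
    (fun t ht => hVOC t ht _ (continuousOn_univ.1 (hW.uncurry_right t ht)))
  simp only [sub_zero] at hν₀
  have hTmem : T ∈ Icc 0 T := ⟨hT0, le_rfl⟩
  rw [hVOC T hTmem _ (continuousOn_univ.1 (hψc.uncurry_right T hTmem))]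
  linarith

/-- Mild solutions of `∂_t μ + ∂_x(v μ) = f·μ` on `[0,1]` (with stopped flow at the
boundary) are weak solutions: `f` is piecewise bounded Lipschitz (Lipschitz away from a
finite set `D` of discontinuities, on which `v` does not vanish), `μ` is a continuous
(w.r.t. `‖·‖_BL*`), TV-bounded solution of the variation of constants formula, and the
weak formulation holds for every `C¹` test function with no-flux boundary conditions. -/
theorem mild_is_weak_fixed_velocity (F : StoppedFlow) (K : ℝ≥0) (hv : LipschitzWith K F.v)
    (T : ℝ) (hT : 0 < T)
    -- `f` piecewise bounded Lipschitz, discontinuities away from zeros of `v`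
    (f : I01 → ℝ) (hfmeas : Measurable f) (D : Finset I01) (Kf Cf : ℝ)
    (hfb : ∀ x, |f x| ≤ Cf)
    (hfl : ∀ x y : I01, (∀ z ∈ D,
        (z : ℝ) ∉ Set.Ioc (min (x:ℝ) (y:ℝ)) (max (x:ℝ) (y:ℝ))) →
        |f x - f y| ≤ Kf * dist (x:ℝ) (y:ℝ))
    (hfc : ∀ x : I01, x ∉ D → ContinuousAt f x)
    (hD : ∀ z ∈ D, F.v z ≠ 0)
    -- `μ` is the mild solution with initial value `ν₀`
    (ν₀ : SignedMeasure I01) (μ : ℝ → SignedMeasure I01) (hμ0 : μ 0 = ν₀)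
    (hcont : ∀ t₀ ∈ Set.Icc (0:ℝ) T, Tendsto (fun t => dualBLNorm (μ t - μ t₀))
        (nhdsWithin t₀ (Set.Icc (0:ℝ) T)) (nhds 0))
    (hTVbdd : ∃ C : ℝ, ∀ t ∈ Set.Icc (0:ℝ) T, tvNorm (μ t) ≤ C)
    (hVOC : ∀ t ∈ Set.Icc (0:ℝ) T, ∀ φ : I01 → ℝ, Continuous φ →
        pairSM (μ t) φ = pairSM (ν₀.map (F.Φ t)) φ +
          ∫ s in (0:ℝ)..t, pairSM ((Ff f (μ s)).map (F.Φ (t - s))) φ)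
    -- test function
    (ψ ψx ψt : ℝ → ℝ → ℝ)
    (hψ : ∀ x ∈ Set.Icc (0:ℝ) 1, ∀ t ∈ Set.Icc (0:ℝ) T,
      HasFDerivWithinAt (fun p : ℝ × ℝ => ψ p.1 p.2)
        ((ψx x t) • (ContinuousLinearMap.fst ℝ ℝ ℝ) +
          (ψt x t) • (ContinuousLinearMap.snd ℝ ℝ ℝ))
        (Set.Icc (0:ℝ) 1 ×ˢ Set.Icc (0:ℝ) T) (x, t))
    (hψx : ContinuousOn (fun p : ℝ × ℝ => ψx p.1 p.2) (Set.Icc (0:ℝ) 1 ×ˢ Set.Icc (0:ℝ) T))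
    (hψt : ContinuousOn (fun p : ℝ × ℝ => ψt p.1 p.2) (Set.Icc (0:ℝ) 1 ×ˢ Set.Icc (0:ℝ) T))
    (hbc : ∀ t ∈ Set.Icc (0:ℝ) T, ψx 0 t = 0 ∧ ψx 1 t = 0)
    :
    pairSM (μ T) (fun x => ψ (x : ℝ) T) - pairSM ν₀ (fun x => ψ (x : ℝ) 0) =
      (∫ t in (0:ℝ)..T,
          pairSM (μ t) (fun x => ψt (x : ℝ) t + ψx (x : ℝ) t * F.v x)) +
        ∫ t in (0:ℝ)..T, pairSM (Ff f (μ t)) (fun x => ψ (x : ℝ) t) :=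
  mild_is_weak_fixed_velocity_general F K hv T hT f hfmeas Cf hfb ν₀ μ hcont hTVbdd hVOC ψ ψx ψt hψ
    hψx hψt hbc
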